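/- arXiv:1801.10607 — 2 statements merged into one kernel-verified Lean document; each statement's English description precedes it below -/
import Mathlib

section
/- For positive integers n, k, t with n ≥ 2, there exists a set of k·n^{k(t-1)}·(n-1)^{k-1} t-rooks in the hypercube {0,...,n-1}^{kt} such that no rook attacks another rook's location. Concretely: for 1 ≤ j ≤ k, place at every point (x_1,...,x_{kt}) with x_{(j-1)t+1}+...+x_{jt} ≡ 0 (mod n) and x_{(m-1)t+1}+...+x_{mt} ≢ 0 (mod n) for all m ≠ j, a t-rook attacking in coordinates (j-1)t+1,...,jt; this is such a set. -/
/-- A rook in `{0,...,n-1}^m`: a point together with a set of chosen coordinate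
directions. -/
abbrev Rook (n m : ℕ) := (Fin m → Fin n) × Finset (Fin m)

/-- A rook attacks every point differing from its location in exactly one of its
chosen coordinates. -/
def Rook.attacks {n m : ℕ} (R : Rook n m) (q : Fin m → Fin n) : Prop :=
  ∃ i ∈ R.2, q i ≠ R.1 i ∧ ∀ j, j ≠ i → q j = R.1 j

namespace PackAux

/-- fiber of the mod-n sum map -/
def fiberEquiv (n t' : ℕ) [NeZero n] (c : ZMod n) :
    {v : Fin (t'+1) → Fin n // ∑ s, ((v s : ℕ) : ZMod n) = c} ≃ (Fin t' → Fin n) where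
  toFun v s := v.1 s.succ
  invFun w := ⟨Fin.cons ⟨(c - ∑ s, ((w s : ℕ) : ZMod n)).val, ZMod.val_lt _⟩ w, by
    rw [Fin.sum_univ_succ]
    simp only [Fin.cons_zero, Fin.cons_succ]
    rw [ZMod.natCast_rightInverse _]
    ring⟩
  left_inv v := by
    ext s
    refine Fin.cases ?_ (fun s' => ?_) s
    · have h2 := v.2
      rw [Fin.sum_univ_succ] at h2
      have key : c - ∑ s : Fin t', ((v.1 s.succ : ℕ) : ZMod n) = ((v.1 0 : ℕ) : ZMod n) :=
        (eq_sub_of_add_eq h2).symm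
      simp only [Fin.cons_zero]
      rw [key, ZMod.val_natCast_of_lt (v.1 0).isLt]
    · simp [Fin.cons_succ]
  right_inv w := by ext s; simp [Fin.cons_succ]

lemma card_fiber (n t' : ℕ) [NeZero n] (c : ZMod n) :
    Fintype.card {v : Fin (t'+1) → Fin n // ∑ s, ((v s : ℕ) : ZMod n) = c} = n ^ t' := by
  rw [Fintype.card_congr (fiberEquiv n t' c)]
  simp

lemma card_fiber_compl (n t' : ℕ) [NeZero n] :
    Fintype.card {v : Fin (t'+1) → Fin n // ¬ (∑ s, ((v s : ℕ) : ZMod n) = 0)} = n ^ (t'+1) - n ^ t' := by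
  rw [Fintype.card_subtype_compl, card_fiber]
  simp


variable (n k t : ℕ)

def bSum (j : Fin k) (x : Fin (k * t) → Fin n) : ZMod n :=
  ∑ s : Fin t, ((x (finProdFinEquiv (j, s)) : ℕ) : ZMod n)

def blk (j : Fin k) : Finset (Fin (k * t)) :=
  Finset.univ.image fun s : Fin t => finProdFinEquiv (j, s)

lemma card_blk (j : Fin k) : (blk k t j).card = t := by
  rw [blk, Finset.card_image_of_injective _ (fun a b h => by
    simpa using (finProdFinEquiv.injective h))]
  simp

lemma blk_inj (ht : 0 < t) {j j' : Fin k} (h : blk k t j = blk k t j') : j = j' := by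
  have h0 : finProdFinEquiv (j, (⟨0, ht⟩ : Fin t)) ∈ blk k t j := by
    simp [blk]
  rw [h] at h0
  simp only [blk, Finset.mem_image, Finset.mem_univ, true_and] at h0
  obtain ⟨s, hs⟩ := h0
  exact (((Prod.mk.injEq _ _ _ _).mp (finProdFinEquiv.injective hs)).1).symm

lemma mem_blk {j : Fin k} {i : Fin (k * t)} :
    i ∈ blk k t j ↔ ∃ s : Fin t, finProdFinEquiv (j, s) = i := by
  simp [blk]

/-- the currying equivalence -/
def curEq : (Fin (k * t) → Fin n) ≃ (Fin k → Fin t → Fin n) where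
  toFun x j s := x (finProdFinEquiv (j, s))
  invFun g i := g (finProdFinEquiv.symm i).1 (finProdFinEquiv.symm i).2
  left_inv x := by
    ext i
    congr 1
    exact congrArg x (by rw [← Prod.mk.eta (p := finProdFinEquiv.symm i), Equiv.apply_symm_apply])
  right_inv g := by ext j s; simp

def Xset (j : Fin k) : Finset (Fin (k * t) → Fin n) :=
  Finset.univ.filter fun x => bSum n k t j x = 0 ∧ ∀ m, m ≠ j → bSum n k t m x ≠ 0

lemma prop_iff {j : Fin k} (g : Fin k → Fin t → Fin n) :
    ((∑ s, ((g j s : ℕ) : ZMod n)) = 0 ∧ ∀ m, m ≠ j → (∑ s, ((g m s : ℕ) : ZMod n)) ≠ 0)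
      ↔ ∀ m, (if m = j then (∑ s, ((g m s : ℕ) : ZMod n)) = 0
              else ¬ (∑ s, ((g m s : ℕ) : ZMod n)) = 0) := by
  constructor
  · rintro ⟨h0, h1⟩ m
    by_cases hm : m = j
    · subst hm; simpa using h0
    · simpa [hm] using h1 m hm
  · intro h
    refine ⟨by simpa using h j, fun m hm => by simpa [hm] using h m⟩

lemma card_Xset (hn : 2 ≤ n) (ht : 0 < t) (j : Fin k) :
    (Xset n k t j).card = n ^ (t - 1) * (n ^ (t - 1) * (n - 1)) ^ (k - 1) := by
  have hnz : NeZero n := ⟨by omega⟩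
  obtain ⟨t', rfl⟩ : ∃ t', t = t' + 1 := ⟨t - 1, by omega⟩
  have key : (Xset n k (t'+1) j).card
      = Fintype.card (∀ m : Fin k, {v : Fin (t'+1) → Fin n //
          if m = j then (∑ s, ((v s : ℕ) : ZMod n)) = 0
          else ¬ (∑ s, ((v s : ℕ) : ZMod n)) = 0}) := by
    rw [Xset, ← Fintype.card_subtype]
    exact Fintype.card_congr
      ((Equiv.subtypeEquiv (p := fun x => bSum n k (t'+1) j x = 0 ∧ ∀ m, m ≠ j → bSum n k (t'+1) m x ≠ 0)
          (q := fun g : Fin k → Fin (t'+1) → Fin n => ∀ m, (if m = j then (∑ s, ((g m s : ℕ) : ZMod n)) = 0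
              else ¬ (∑ s, ((g m s : ℕ) : ZMod n)) = 0))
          (curEq n k (t'+1)) (fun x => prop_iff n k (t'+1) (curEq n k (t'+1) x))).trans
        (Equiv.subtypePiEquivPi (p := fun (m : Fin k) (v : Fin (t'+1) → Fin n) =>
          if m = j then (∑ s, ((v s : ℕ) : ZMod n)) = 0
          else ¬ (∑ s, ((v s : ℕ) : ZMod n)) = 0)))
  rw [key, Fintype.card_pi]
  have hfac : ∀ m : Fin k, Fintype.card {v : Fin (t'+1) → Fin n //
          if m = j then (∑ s, ((v s : ℕ) : ZMod n)) = 0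
          else ¬ (∑ s, ((v s : ℕ) : ZMod n)) = 0}
      = if m = j then n ^ t' else n ^ (t'+1) - n ^ t' := by
    intro m
    by_cases hm : m = j
    · rw [if_pos hm]
      rw [Fintype.card_congr (Equiv.subtypeEquivRight
        (q := fun v : Fin (t'+1) → Fin n => (∑ s, ((v s : ℕ) : ZMod n)) = 0)
        (fun v => by simp [hm]))]
      exact card_fiber n t' 0
    · rw [if_neg hm]
      rw [Fintype.card_congr (Equiv.subtypeEquivRight
        (q := fun v : Fin (t'+1) → Fin n => ¬ (∑ s, ((v s : ℕ) : ZMod n)) = 0)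
        (fun v => by simp [hm]))]
      exact card_fiber_compl n t'
  rw [Finset.prod_congr rfl (fun m _ => hfac m)]
  rw [← Finset.mul_prod_erase Finset.univ _ (Finset.mem_univ j), if_pos rfl]
  rw [Finset.prod_congr rfl (fun m hm => if_neg (Finset.ne_of_mem_erase hm)),
    Finset.prod_const, Finset.card_erase_of_mem (Finset.mem_univ j),
    Finset.card_univ, Fintype.card_fin]
  have hsub : n ^ (t'+1) - n ^ t' = n ^ t' * (n - 1) := by
    rw [Nat.mul_sub, mul_one, pow_succ]
  rw [hsub]
  norm_num

end PackAux

theorem packing_construction_blocks (n k t : ℕ) (hn : 2 ≤ n) (hk : 0 < k) (ht : 0 < t) :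
    ∃ S : Finset (Rook n (k * t)),
      S.card = k * n ^ (k * (t - 1)) * (n - 1) ^ (k - 1) ∧
      (∀ R ∈ S, R.2.card = t) ∧
      (∀ R1 ∈ S, ∀ R2 ∈ S, R1 ≠ R2 → R1.1 ≠ R2.1 ∧ ¬ R1.attacks R2.1) := by
  classical
  have memS : ∀ R : Rook n (k*t),
      R ∈ (Finset.univ.sigma (fun j : Fin k => PackAux.Xset n k t j)).image
        (fun p => (p.2, PackAux.blk k t p.1)) ↔
      ∃ j : Fin k, R.2 = PackAux.blk k t j ∧ PackAux.bSum n k t j R.1 = 0 ∧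
        ∀ m, m ≠ j → PackAux.bSum n k t m R.1 ≠ 0 := by
    intro R
    simp only [Finset.mem_image, Finset.mem_sigma, Finset.mem_univ, true_and,
      PackAux.Xset, Finset.mem_filter, Sigma.exists]
    constructor
    · rintro ⟨j, x, hx, rfl⟩
      exact ⟨j, rfl, hx⟩
    · rintro ⟨j, h2, hx⟩
      exact ⟨j, R.1, hx, by rw [← h2]⟩
  refine ⟨(Finset.univ.sigma (fun j : Fin k => PackAux.Xset n k t j)).image
      (fun p => (p.2, PackAux.blk k t p.1)), ?_, ?_, ?_⟩
  · -- cardinality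
    rw [Finset.card_image_of_injective _ ?inj]
    case inj =>
      rintro ⟨j, x⟩ ⟨j', x'⟩ h
      simp only [Prod.mk.injEq] at h
      obtain ⟨rfl⟩ := PackAux.blk_inj k t ht h.2
      simp [h.1]
    rw [Finset.card_sigma]
    rw [Finset.sum_congr rfl (fun j _ => PackAux.card_Xset n k t hn ht j),
      Finset.sum_const, Finset.card_univ, Fintype.card_fin, smul_eq_mul]
    obtain ⟨k', rfl⟩ : ∃ k', k = k' + 1 := ⟨k - 1, by omega⟩
    simp only [Nat.add_sub_cancel]
    rw [mul_pow, ← pow_mul]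
    have he : (t - 1) + (t - 1) * k' = (k' + 1) * (t - 1) := by ring
    rw [← mul_assoc, ← mul_assoc, mul_assoc (k' + 1), ← pow_add, he]
  · -- block sizes
    intro R hR
    obtain ⟨j, hB, -⟩ := (memS R).mp hR
    rw [hB, PackAux.card_blk]
  · -- non-attacking
    rintro R1 hR1 R2 hR2 hne
    obtain ⟨j, hB1, h01, h11⟩ := (memS R1).mp hR1
    obtain ⟨m, hB2, h02, h12⟩ := (memS R2).mp hR2
    have hxy : R1.1 ≠ R2.1 := by
      intro hxy
      by_cases hjm : j = m
      · subst hjm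
        exact hne (Prod.ext hxy (hB1.trans hB2.symm))
      · exact h12 j (fun h => hjm h) (by rw [← hxy]; exact h01)
    refine ⟨hxy, ?_⟩
    rintro ⟨i, hi, hnei, hagree⟩
    rw [hB1, PackAux.mem_blk] at hi
    obtain ⟨s', rfl⟩ := hi
    -- block j sum of R2.1 is nonzero
    have hdiff : PackAux.bSum n k t j R2.1 - PackAux.bSum n k t j R1.1
        = ((R2.1 (finProdFinEquiv (j, s')) : ℕ) : ZMod n)
          - ((R1.1 (finProdFinEquiv (j, s')) : ℕ) : ZMod n) := by
      rw [PackAux.bSum, PackAux.bSum, ← Finset.sum_sub_distrib]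
      rw [Finset.sum_eq_single s']
      · intro s _ hs
        have hne' : finProdFinEquiv (j, s) ≠ finProdFinEquiv (j, s') := fun h =>
          hs (by simpa using ((Prod.mk.injEq _ _ _ _).mp (finProdFinEquiv.injective h)).2)
        rw [hagree _ hne', sub_self]
      · simp
    have hcast : ((R2.1 (finProdFinEquiv (j, s')) : ℕ) : ZMod n)
        ≠ ((R1.1 (finProdFinEquiv (j, s')) : ℕ) : ZMod n) := by
      intro h
      apply hnei
      have := congrArg ZMod.val h
      rw [ZMod.val_natCast_of_lt (R2.1 _).isLt, ZMod.val_natCast_of_lt (R1.1 _).isLt] at this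
      exact Fin.val_injective this
    have hjj : PackAux.bSum n k t j R2.1 ≠ 0 := by
      intro h
      rw [h, h01, sub_zero] at hdiff
      exact hcast (sub_eq_zero.mp hdiff.symm)
    have hother : ∀ m' : Fin k, m' ≠ j →
        PackAux.bSum n k t m' R2.1 = PackAux.bSum n k t m' R1.1 := by
      intro m' hm'
      refine Finset.sum_congr rfl (fun s _ => ?_)
      have hne' : finProdFinEquiv (m', s) ≠ finProdFinEquiv (j, s') := fun h =>
        hm' ((Prod.mk.injEq _ _ _ _).mp (finProdFinEquiv.injective h)).1
      rw [hagree _ hne']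
    by_cases hmj : m = j
    · exact hjj (hmj ▸ h02)
    · exact h11 m hmj (by rw [← hother m hmj]; exact h02)
end

section
/- For positive integers n, k, t, the maximum number of t-rooks in {0,...,n-1}^{kt} with no rook attacking another equals at most k·n^{kt-1} and at least k·n^{k(t-1)}·(n-1)^{k-1}; consequently lim_{n→∞} b_{n,kt,t}/n^{kt-1} = k. -/
/-- `S` is a packing of `t`-rooks: each rook has `t` chosen directions, locations
are distinct, and no rook attacks another rook's location. -/
def IsPacking (n m t : ℕ) (S : Finset (Rook n m)) : Prop :=
  (∀ R ∈ S, R.2.card = t) ∧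
  ∀ R1 ∈ S, ∀ R2 ∈ S, R1 ≠ R2 → R1.1 ≠ R2.1 ∧ ¬ R1.attacks R2.1

/-- `bval n m t` : the maximum size of a packing of `t`-rooks in `{0,...,n-1}^m`. -/
noncomputable def bval (n m t : ℕ) : ℕ :=
  sSup {s | ∃ S : Finset (Rook n m), IsPacking n m t S ∧ S.card = s}

/-!
Upper bound: a rook of a packing using direction `i` is determined by the line through it in
direction `i`, since two rooks on that line would share a location or one would attack the other.
Double counting pairs (rook, direction) against the `m n^(m-1)` axis-parallel lines gives
`t |S| ≤ m n^(m-1)`.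

Lower bound: split the `kt` coordinates into `k` blocks of `t`, and at every point whose block
sums modulo `n` vanish on exactly one block `j`, put a rook moving along block `j`. A move of
that rook changes the sum of block `j` and no other, so the points it attacks have no vanishing
block sum and carry no rook. Counting such points gives `k n^(t-1) (n^(t-1) (n-1))^(k-1)`.
The limit follows by squeezing between the two bounds.
-/

open Finset Filter Topology

theorem card_filter_sum_eq {G : Type*} [AddCommGroup G] [Fintype G] [DecidableEq G] {t : ℕ}
    (ht : 0 < t) (c : G) : #{g : Fin t → G | ∑ i, g i = c} = Fintype.card G ^ (t - 1) := by
  obtain ⟨s, rfl⟩ := Nat.exists_eq_add_one_of_ne_zero ht.ne'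
  rw [Nat.add_sub_cancel, show Fintype.card G ^ s = #(univ : Finset (Fin s → G)) by simp]
  refine card_nbij' Fin.tail (fun h => Fin.cons (c - ∑ i, h i) h)
    (fun _ _ => mem_coe.2 (mem_univ _)) (fun h _ => by simp [Fin.sum_univ_succ]) (fun g hg => ?_)
    (fun h _ => Fin.tail_cons _ _)
  simp only [coe_filter, mem_univ, true_and, Set.mem_ofPred_eq, Fin.sum_univ_succ] at hg
  simp [← hg, Fin.tail]

theorem card_filter_sum_ne_zero {G : Type*} [AddCommGroup G] [Fintype G] [DecidableEq G] {t : ℕ}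
    (ht : 0 < t) :
    #{g : Fin t → G | ∑ i, g i ≠ 0} = Fintype.card G ^ (t - 1) * (Fintype.card G - 1) := by
  have h := card_filter_add_card_filter_not (s := univ) fun g : Fin t → G => ∑ i, g i = 0
  rw [card_filter_sum_eq ht, card_univ, Fintype.card_fun, Fintype.card_fin] at h
  rw [Nat.mul_sub_one, ← pow_succ, Nat.sub_add_cancel ht]
  simp only [ne_eq]
  omega

theorem sum_sub_sum_eq_of_forall_ne {ι G : Type*} [AddCommGroup G] {s : Finset ι} {c : ι}
    (hc : c ∈ s) {x y : ι → G} (h : ∀ i, i ≠ c → y i = x i) :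
    ∑ i ∈ s, y i - ∑ i ∈ s, x i = y c - x c := by
  rw [← sum_sub_distrib, sum_eq_single_of_mem c hc fun i _ hi => by rw [h i hi, sub_self]]

section Packing

variable {n m t : ℕ}

theorem Rook.attacks_or_eq {R : Rook n m} {i : Fin m} (hi : i ∈ R.2) {q : Fin m → Fin n}
    (hq : ∀ j, j ≠ i → q j = R.1 j) : R.attacks q ∨ q = R.1 := by
  by_cases hqi : q i = R.1 i
  · refine Or.inr (funext fun j => ?_)
    by_cases hj : j = i
    · rw [hj, hqi]
    · exact hq j hj
  · exact Or.inl ⟨i, hi, hqi, hq⟩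

theorem IsPacking.empty : IsPacking n m t ∅ := by
  simp [IsPacking]

theorem IsPacking.eq_of_forall_ne_eq {S : Finset (Rook n m)} (hS : IsPacking n m t S)
    {R₁ R₂ : Rook n m} (h₁ : R₁ ∈ S) (h₂ : R₂ ∈ S) {i : Fin m} (hi : i ∈ R₁.2)
    (h : ∀ j, j ≠ i → R₂.1 j = R₁.1 j) : R₁ = R₂ := by
  by_contra hne
  obtain ⟨hloc, hatt⟩ := hS.2 R₁ h₁ R₂ h₂ hne
  exact (R₁.attacks_or_eq hi h).elim hatt fun heq => hloc heq.symm

theorem IsPacking.card_filter_mem_le {S : Finset (Rook n m)} (hS : IsPacking n m t S)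
    (i : Fin m) : #{R ∈ S | i ∈ R.2} ≤ n ^ (m - 1) := by
  calc #{R ∈ S | i ∈ R.2}
      ≤ #(univ : Finset ({j // j ≠ i} → Fin n)) := by
        refine card_le_card_of_injOn (fun R j => R.1 j) (fun _ _ => mem_coe.2 (mem_univ _)) ?_
        intro R₁ h₁ R₂ h₂ h
        simp only [coe_filter, Set.mem_ofPred_eq] at h₁ h₂
        exact hS.eq_of_forall_ne_eq h₁.1 h₂.1 h₁.2 fun j hj => (congrFun h ⟨j, hj⟩).symm
    _ = n ^ (m - 1) := by simp

theorem IsPacking.mul_card_le {S : Finset (Rook n m)} (hS : IsPacking n m t S) :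
    t * #S ≤ m * n ^ (m - 1) := by
  classical
  calc t * #S = ∑ R ∈ S, #R.2 := by rw [sum_congr rfl hS.1, sum_const, smul_eq_mul, mul_comm]
    _ = ∑ i, #{R ∈ S | i ∈ R.2} := by
      simpa [bipartiteAbove, bipartiteBelow] using
        (sum_card_bipartiteAbove_eq_sum_card_bipartiteBelow (fun (i : Fin m) (R : Rook n m) =>
          i ∈ R.2) (s := univ) (t := S)).symm
    _ ≤ ∑ _i : Fin m, n ^ (m - 1) := sum_le_sum fun i _ => hS.card_filter_mem_le i
    _ = m * n ^ (m - 1) := by simp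

theorem IsPacking.card_le_bval {S : Finset (Rook n m)} (hS : IsPacking n m t S) :
    #S ≤ bval n m t :=
  le_csSup ⟨Fintype.card (Rook n m), by rintro _ ⟨S', -, rfl⟩; exact card_le_univ S'⟩ ⟨S, hS, rfl⟩

theorem bval_le_of_forall {B : ℕ} (h : ∀ S, IsPacking n m t S → #S ≤ B) : bval n m t ≤ B :=
  csSup_le ⟨0, ∅, IsPacking.empty, card_empty⟩ (by rintro _ ⟨S, hS, rfl⟩; exact h S hS)

theorem bval_le_mul_pow (k : ℕ) (ht : 0 < t) : bval n (k * t) t ≤ k * n ^ (k * t - 1) :=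
  bval_le_of_forall fun _ hS => Nat.le_of_mul_le_mul_left (hS.mul_card_le.trans_eq (by ring)) ht

end Packing

section BlockPacking

variable {n k t : ℕ}

def block (t : ℕ) (j : Fin k) : Finset (Fin (k * t)) :=
  univ.map ⟨fun b => finProdFinEquiv (j, b), fun _ _ h => by simpa using h⟩

theorem card_block (j : Fin k) : #(block t j) = t := by
  simp [block]

theorem disjoint_block {i j : Fin k} (h : i ≠ j) : Disjoint (block t i) (block t j) := by
  simp only [block, disjoint_left, Finset.mem_map, mem_univ, true_and]
  rintro _ ⟨b, rfl⟩ ⟨b', hb⟩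
  exact h (congrArg Prod.fst (finProdFinEquiv.injective hb)).symm

variable [NeZero n]

-- `Fin n` carries addition modulo `n`.
def blockSum (t : ℕ) (x : Fin (k * t) → Fin n) (j : Fin k) : Fin n :=
  ∑ c ∈ block t j, x c

theorem blockSum_eq_sum_fin (x : Fin (k * t) → Fin n) (j : Fin k) :
    blockSum t x j = ∑ b, x (finProdFinEquiv (j, b)) :=
  sum_map _ _ _

def zeroBlockSet (n t : ℕ) [NeZero n] (j : Fin k) : Finset (Fin (k * t) → Fin n) :=
  {x | ∀ i, blockSum t x i = 0 ↔ i = j}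

theorem mem_zeroBlockSet {x : Fin (k * t) → Fin n} {j : Fin k} :
    x ∈ zeroBlockSet n t j ↔ ∀ i, blockSum t x i = 0 ↔ i = j := by
  simp [zeroBlockSet]

theorem eq_of_mem_zeroBlockSet {x : Fin (k * t) → Fin n} {i j : Fin k}
    (hi : x ∈ zeroBlockSet n t i) (hj : x ∈ zeroBlockSet n t j) : i = j :=
  (mem_zeroBlockSet.1 hj i).1 ((mem_zeroBlockSet.1 hi i).2 rfl)

theorem blockSum_ne_zero_of_attacks {x y : Fin (k * t) → Fin n} {j : Fin k}
    (hx : x ∈ zeroBlockSet n t j) (hatt : Rook.attacks (x, block t j) y) (i : Fin k) :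
    blockSum t y i ≠ 0 := by
  obtain ⟨c, hc, hne, hoff⟩ := hatt
  rw [mem_zeroBlockSet] at hx
  by_cases hij : i = j
  · subst hij
    intro hy
    have hdiff := sum_sub_sum_eq_of_forall_ne hc hoff
    rw [← blockSum, ← blockSum, hy, (hx i).2 rfl, sub_self, eq_comm, sub_eq_zero] at hdiff
    exact hne hdiff
  · have hc' : c ∉ block t i := disjoint_left.1 (disjoint_block (Ne.symm hij)) hc
    rw [blockSum, sum_congr rfl fun c' hc'' => hoff c' (ne_of_mem_of_not_mem hc'' hc')]
    exact fun h => hij ((hx i).1 h)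

variable (n k t) in
def blockPacking : Finset (Rook n (k * t)) :=
  (univ.sigma fun j => zeroBlockSet n t j).image fun p => (p.2, block t p.1)

theorem isPacking_blockPacking : IsPacking n (k * t) t (blockPacking n k t) := by
  refine ⟨?_, ?_⟩
  · simp only [blockPacking, mem_image, forall_exists_index, and_imp]
    rintro _ p _ rfl
    exact card_block p.1
  · simp only [blockPacking, mem_image, mem_sigma, mem_univ, true_and, ne_eq,
      forall_exists_index, and_imp]
    rintro _ ⟨i, x⟩ hx rfl _ ⟨j, y⟩ hy rfl hne
    refine ⟨fun hxy => hne ?_, fun hatt => ?_⟩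
    · subst hxy
      rw [eq_of_mem_zeroBlockSet hx hy]
    · exact blockSum_ne_zero_of_attacks hx hatt j ((mem_zeroBlockSet.1 hy j).2 rfl)

theorem card_zeroBlockSet (ht : 0 < t) (j : Fin k) :
    #(zeroBlockSet n t j) = n ^ (t - 1) * (n ^ (t - 1) * (n - 1)) ^ (k - 1) := by
  classical
  let A : Fin k → Finset (Fin t → Fin n) := fun i => {g | ∑ b, g b = 0 ↔ i = j}
  have hA : ∀ i, #(A i) = if i = j then n ^ (t - 1) else n ^ (t - 1) * (n - 1) := by
    intro i
    split_ifs with hij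
    · simpa [A, hij] using card_filter_sum_eq (G := Fin n) ht 0
    · simpa [A, hij] using card_filter_sum_ne_zero (G := Fin n) ht
  calc #(zeroBlockSet n t j)
      = #(Fintype.piFinset A) :=
        card_equiv ((finProdFinEquiv.arrowCongr (Equiv.refl (Fin n))).symm.trans
          (Equiv.curry _ _ _)) fun x => by
            simp [mem_zeroBlockSet, blockSum_eq_sum_fin, A]
    _ = ∏ i, #(A i) := Fintype.card_piFinset A
    _ = n ^ (t - 1) * (n ^ (t - 1) * (n - 1)) ^ (k - 1) := by
      rw [Fintype.prod_eq_mul_prod_compl j, hA, if_pos rfl,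
        prod_congr rfl fun i hi => (hA i).trans (if_neg (mem_compl.1 hi ∘ mem_singleton.2)),
        prod_const, card_compl, card_singleton, Fintype.card_fin]

theorem card_blockPacking (ht : 0 < t) :
    #(blockPacking n k t) = k * (n ^ (t - 1) * (n ^ (t - 1) * (n - 1)) ^ (k - 1)) := by
  rw [blockPacking, card_image_of_injOn, card_sigma,
    sum_congr rfl fun j _ => card_zeroBlockSet ht j, sum_const, card_univ, Fintype.card_fin,
    smul_eq_mul]
  rintro ⟨i, x⟩ hx ⟨j, y⟩ hy hxy
  simp only [coe_sigma, Set.mem_sigma_iff, mem_coe, mem_univ, true_and, Prod.mk.injEq]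
    at hx hy hxy
  obtain ⟨rfl, -⟩ := hxy
  rw [eq_of_mem_zeroBlockSet hx hy]

theorem mul_pow_mul_pow_le_bval (ht : 0 < t) :
    k * n ^ (k * (t - 1)) * (n - 1) ^ (k - 1) ≤ bval n (k * t) t := by
  calc k * n ^ (k * (t - 1)) * (n - 1) ^ (k - 1) = #(blockPacking n k t) := by
        rw [card_blockPacking ht]
        rcases k with _ | k
        · simp
        · simp only [Nat.add_sub_cancel]
          ring
    _ ≤ bval n (k * t) t := isPacking_blockPacking.card_le_bval

end BlockPacking

section Asymptotics

variable {n k t : ℕ}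

theorem mul_one_sub_inv_pow_le_bval_div (ht : 0 < t) (hn : 0 < n) :
    k * (1 - (n : ℝ)⁻¹) ^ (k - 1) ≤ bval n (k * t) t / (n : ℝ) ^ (k * t - 1) := by
  have : NeZero n := NeZero.of_pos hn
  have hn' : (n : ℝ) ≠ 0 := by positivity
  have hexp : k * t - 1 = k * (t - 1) + (k - 1) := by
    rcases k with _ | k
    · simp
    · have : (k + 1) * t = (k + 1) * (t - 1) + (k + 1) := by
        rw [← Nat.mul_add_one, Nat.sub_add_cancel ht]
      omega
  have hlower : (k : ℝ) * n ^ (k * (t - 1)) * (n - 1) ^ (k - 1) ≤ bval n (k * t) t := by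
    have h := Nat.cast_le (α := ℝ) |>.2 (mul_pow_mul_pow_le_bval (n := n) (k := k) ht)
    push_cast [Nat.cast_sub hn] at h
    exact h
  rw [le_div_iff₀ (by positivity)]
  calc k * (1 - (n : ℝ)⁻¹) ^ (k - 1) * (n : ℝ) ^ (k * t - 1)
      = k * n ^ (k * (t - 1)) * ((1 - (n : ℝ)⁻¹) * n) ^ (k - 1) := by
        rw [hexp, pow_add, mul_pow]
        ring
    _ = k * n ^ (k * (t - 1)) * (n - 1) ^ (k - 1) := by rw [sub_mul, inv_mul_cancel₀ hn', one_mul]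
    _ ≤ bval n (k * t) t := hlower

theorem bval_div_le (ht : 0 < t) (hn : 0 < n) :
    bval n (k * t) t / (n : ℝ) ^ (k * t - 1) ≤ k := by
  rw [div_le_iff₀ (by positivity)]
  exact_mod_cast bval_le_mul_pow k ht

end Asymptotics

theorem packing_asymptotics_general (k t : ℕ) (ht : 0 < t) :
    (∀ n : ℕ, 0 < n → bval n (k * t) t ≤ k * n ^ (k * t - 1)) ∧
    (∀ n : ℕ, 0 < n → k * n ^ (k * (t - 1)) * (n - 1) ^ (k - 1) ≤ bval n (k * t) t) ∧
    Filter.Tendsto (fun n : ℕ => (bval n (k * t) t : ℝ) / (n : ℝ) ^ (k * t - 1))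
      Filter.atTop (nhds (k : ℝ)) := by
  refine ⟨fun n _ => bval_le_mul_pow k ht,
    fun n hn => have : NeZero n := NeZero.of_pos hn; mul_pow_mul_pow_le_bval ht, ?_⟩
  have hlower : Tendsto (fun n : ℕ => (k : ℝ) * (1 - (n : ℝ)⁻¹) ^ (k - 1)) atTop (𝓝 k) := by
    simpa using (((tendsto_const_nhds (x := (1 : ℝ))).sub
      (tendsto_inv_atTop_nhds_zero_nat (𝕜 := ℝ))).pow (k - 1)).const_mul (k : ℝ)
  refine tendsto_of_tendsto_of_tendsto_of_le_of_le' hlower tendsto_const_nhds ?_ ?_ <;>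
    filter_upwards [eventually_gt_atTop 0] with n hn
  · exact mul_one_sub_inv_pow_le_bval_div ht hn
  · exact bval_div_le ht hn

theorem packing_asymptotics (k t : ℕ) (hk : 0 < k) (ht : 0 < t) :
    (∀ n : ℕ, 0 < n → bval n (k * t) t ≤ k * n ^ (k * t - 1)) ∧
    (∀ n : ℕ, 0 < n → k * n ^ (k * (t - 1)) * (n - 1) ^ (k - 1) ≤ bval n (k * t) t) ∧
    Filter.Tendsto (fun n : ℕ => (bval n (k * t) t : ℝ) / (n : ℝ) ^ (k * t - 1))
      Filter.atTop (nhds (k : ℝ)) :=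
  packing_asymptotics_general k t ht
end
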